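/- Let T be an inverse semigroup and U a right inverse T-set. Every idempotent of the semigroup K(U) = {ω_{u,u'} : u, u' ∈ U} (under composition) is of the form ω_{u,u} for some u ∈ U. -/
import Mathlib


/-- An inverse semigroup: a semigroup in which every element has a unique
generalized inverse `star s`. -/
class InverseSemigroup (S : Type*) extends Semigroup S where
  star : S → S
  mul_star_mul : ∀ s : S, s * star s * s = s
  star_mul_star : ∀ s : S, star s * s * star s = star s
  star_unique : ∀ s t : S, s * t * s = s → t * s * t = t → t = star s

postfix:max "⋆" => InverseSemigroup.star

/-- A right regular `T`-set over an inverse semigroup `T`. -/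
structure RightRegularSet (T : Type*) [InverseSemigroup T] (U : Type*) where
  act : U → T → U
  act_act : ∀ (u : U) (t t' : T), act (act u t) t' = act u (t * t')
  pair : U → U → T
  pair_act : ∀ (u u' : U) (t : T), pair u (act u' t) = pair u u' * t
  pair_star : ∀ u u' : U, (pair u u')⋆ = pair u' u
  act_pair_self : ∀ u : U, act u (pair u u) = u

/-- Condition (R-iv): the right regular `T`-set is a right inverse `T`-set. -/
def RightRegularSet.IsInverse {T : Type*} [InverseSemigroup T] {U : Type*}
    (M : RightRegularSet T U) : Prop :=
  ∀ u u' : U, M.act u (M.pair u' u) = u → M.act u' (M.pair u u') = u' → u = u'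

/-- The rank-one map `ω_{v,u} : U → V`, `ω_{v,u}(u') = v [u, u']`. -/
def omega {T : Type*} [InverseSemigroup T] {U V : Type*}
    (MU : RightRegularSet T U) (MV : RightRegularSet T V) (v : V) (u : U) :
    U → V :=
  fun w => MV.act v (MU.pair u w)

namespace InverseSemigroup
variable {S : Type*} [InverseSemigroup S]

lemma idem_star {e : S} (he : e * e = e) : e⋆ = e :=
  (star_unique e e (by rw [he, he]) (by rw [he, he])).symm

lemma idem_mul_idem {e f : S} (he : e * e = e) (hf : f * f = f) :
    (e * f) * (e * f) = e * f := by
  set g := e * f with hg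
  set x := g⋆ with hx
  have h1 : g * x * g = g := mul_star_mul g
  have h2 : x * g * x = x := star_mul_star g
  have hy : (f * x * e) * (f * x * e) = f * x * e := by
    calc (f * x * e) * (f * x * e) = f * (x * g * x) * e := by
          simp only [hg, mul_assoc]
      _ = f * x * e := by rw [h2, mul_assoc]
  have hinv1 : g * (f * x * e) * g = g := by
    calc g * (f * x * e) * g = e * (f * f) * x * (e * e) * f := by
          simp only [hg, mul_assoc]
      _ = g * x * g := by rw [he, hf]; simp only [hg, mul_assoc]
      _ = g := h1
  have hinv2 : (f * x * e) * g * (f * x * e) = f * x * e := by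
    calc (f * x * e) * g * (f * x * e) = f * x * (e * e) * (f * f) * x * e := by
          simp only [hg, mul_assoc]
      _ = f * (x * g * x) * e := by rw [he, hf]; simp only [hg, mul_assoc]
      _ = f * x * e := by rw [h2, mul_assoc]
  have hxy : f * x * e = x := star_unique g (f * x * e) hinv1 hinv2
  have hxidem : x * x = x := by rw [← hxy]; exact hy
  have : g = x⋆ := star_unique x g h2 h1
  rw [this, idem_star hxidem] at *
  rw [this]; exact hxidem

lemma idem_comm {e f : S} (he : e * e = e) (hf : f * f = f) :
    e * f = f * e := by
  have hef : (e * f) * (e * f) = e * f := idem_mul_idem he hf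
  have hfe : (f * e) * (f * e) = f * e := idem_mul_idem hf he
  have h1 : (e * f) * (f * e) * (e * f) = e * f := by
    calc (e * f) * (f * e) * (e * f) = e * (f * f) * (e * e) * f := by
          simp only [mul_assoc]
      _ = (e * f) * (e * f) := by rw [hf, he]; simp only [mul_assoc]
      _ = e * f := hef
  have h2 : (f * e) * (e * f) * (f * e) = f * e := by
    calc (f * e) * (e * f) * (f * e) = f * (e * e) * (f * f) * e := by
          simp only [mul_assoc]
      _ = (f * e) * (f * e) := by rw [he, hf]; simp only [mul_assoc]
      _ = f * e := hfe
  have := star_unique (e * f) (f * e) h1 h2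
  rw [idem_star hef] at this
  exact this.symm

lemma star_mul (x y : S) : (x * y)⋆ = y⋆ * x⋆ := by
  have he : (y * y⋆) * (y * y⋆) = y * y⋆ := by
    calc (y * y⋆) * (y * y⋆) = (y * y⋆ * y) * y⋆ := by simp only [mul_assoc]
      _ = y * y⋆ := by rw [mul_star_mul]
  have hf : (x⋆ * x) * (x⋆ * x) = x⋆ * x := by
    calc (x⋆ * x) * (x⋆ * x) = (x⋆ * x * x⋆) * x := by simp only [mul_assoc]
      _ = x⋆ * x := by rw [star_mul_star]
  have h1 : (x * y) * (y⋆ * x⋆) * (x * y) = x * y := by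
    calc (x * y) * (y⋆ * x⋆) * (x * y) = x * ((y * y⋆) * (x⋆ * x)) * y := by
          simp only [mul_assoc]
      _ = x * ((x⋆ * x) * (y * y⋆)) * y := by rw [idem_comm he hf]
      _ = (x * x⋆ * x) * (y * y⋆ * y) := by simp only [mul_assoc]
      _ = x * y := by rw [mul_star_mul, mul_star_mul]
  have h2 : (y⋆ * x⋆) * (x * y) * (y⋆ * x⋆) = y⋆ * x⋆ := by
    calc (y⋆ * x⋆) * (x * y) * (y⋆ * x⋆) = y⋆ * ((x⋆ * x) * (y * y⋆)) * x⋆ := by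
          simp only [mul_assoc]
      _ = y⋆ * ((y * y⋆) * (x⋆ * x)) * x⋆ := by rw [idem_comm he hf]
      _ = (y⋆ * y * y⋆) * (x⋆ * x * x⋆) := by simp only [mul_assoc]
      _ = y⋆ * x⋆ := by rw [star_mul_star, star_mul_star]
  exact (star_unique (x * y) (y⋆ * x⋆) h1 h2).symm

end InverseSemigroup

theorem stmt13 {T : Type*} [InverseSemigroup T] {U : Type*}
    (M : RightRegularSet T U) (hM : M.IsInverse) (a b : U)
    (hidem : omega M M a b ∘ omega M M a b = omega M M a b) :
    ∃ u : U, omega M M a b = omega M M u u := by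
  have H : ∀ w, M.act (M.act a (M.pair b a)) (M.pair b w) = M.act a (M.pair b w) := by
    intro w
    have h := congrFun hidem w
    simp only [Function.comp_apply, omega] at h
    rw [M.pair_act, ← M.act_act] at h
    exact h
  set t := M.pair b a with ht
  set a' := M.act a t with ha'
  have h1 : M.act a' t = a' := H a
  set e := M.pair b a' with he'
  have he_tt : e = t * t := by rw [he', ha', ht, M.pair_act]
  have h3 : M.act a' e = a' := by rw [he_tt, ← M.act_act, h1, h1]
  have hee : e * e = e := by
    have h4 : M.pair b (M.act a' e) = M.pair b a' := by rw [h3]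
    rw [M.pair_act, ← he'] at h4
    exact h4
  have hes : e⋆ = e := InverseSemigroup.idem_star hee
  have ha'b : M.pair a' b = e := by rw [← M.pair_star, ← he', hes]
  set b' := M.act b e with hb'
  have hpb'a' : M.pair b' a' = e := by
    rw [← M.pair_star, hb', M.pair_act, ha'b, hee, hes]
  have hpa'b' : M.pair a' b' = e := by
    rw [hb', M.pair_act, ha'b, hee]
  have hx : M.act a' (M.pair b' a') = a' := by rw [hpb'a', h3]
  have hy : M.act b' (M.pair a' b') = b' := by
    rw [hpa'b', hb', M.act_act, hee]
  have hab : a' = b' := hM a' b' hx hy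
  refine ⟨a', funext fun w => ?_⟩
  show M.act a (M.pair b w) = M.act a' (M.pair a' w)
  have hpa'w : M.pair a' w = e * M.pair b w := by
    rw [hab, ← M.pair_star, hb', M.pair_act, InverseSemigroup.star_mul, hes,
      M.pair_star]
  rw [hpa'w, ← M.act_act, h3, H w]
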